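/- arXiv:1804.05380 — 2 statements merged into one kernel-verified Lean document; each statement's English description precedes it below -/
import Mathlib

section
/- Let w(β_n) = min over vertices v of the total weight of n-step bridges starting at v. Then w(β_{m+n}) ≥ w(β_m)·w(β_n) for all m,n ≥ 0, and consequently the limit β = lim_{n→∞} w(β_n)^{1/n} exists and satisfies w(β_n) ≤ β^n for all n ≥ 0. -/
open Filter Topology

/-- An `n`-step self-avoiding walk on the graph `G`. -/
def GraphSAW {V : Type*} (G : SimpleGraph V) (n : ℕ) (π : Fin (n + 1) → V) : Prop :=
  Function.Injective π ∧ ∀ i : Fin n, G.Adj (π i.castSucc) (π i.succ)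

/-- A walk is a bridge with respect to the height function `h` if
`h(π₀) < h(πᵢ) ≤ h(πₙ)` for `1 ≤ i ≤ n`. -/
def IsBridgeWalk {V : Type*} (h : V → ℤ) (n : ℕ) (π : Fin (n + 1) → V) : Prop :=
  ∀ i : Fin (n + 1), (i ≠ 0 → h (π 0) < h (π i)) ∧ h (π i) ≤ h (π (Fin.last n))

/-- The weight of a walk: the product of the edge weights. -/
noncomputable def walkWeight {V : Type*} (φ : V → V → ℝ) (n : ℕ) (π : Fin (n + 1) → V) : ℝ :=
  ∏ i : Fin n, φ (π i.castSucc) (π i.succ)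

/-- `w(β_n(v))`: the total weight of `n`-step bridges starting at `v`. -/
noncomputable def bridgeWeightFrom {V : Type*} (G : SimpleGraph V) (h : V → ℤ)
    (φ : V → V → ℝ) (n : ℕ) (v : V) : ℝ :=
  ∑' π : {π : Fin (n + 1) → V // GraphSAW G n π ∧ IsBridgeWalk h n π ∧ π 0 = v},
    walkWeight φ n π.1

/-- `w(β_n) = min_v w(β_n(v))`. -/
noncomputable def minBridgeWeight {V : Type*} (G : SimpleGraph V) (h : V → ℤ)
    (φ : V → V → ℝ) (n : ℕ) : ℝ :=
  sInf (Set.range (bridgeWeightFrom G h φ n))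

/-!
Concatenating an `m`-step bridge from `v` with an `n`-step bridge from its endpoint gives,
injectively, an `(m + n)`-step bridge from `v`, so `w(β_{m+n}(v)) ≥ w(β_m(v)) · w(β_n)`; taking
`v` to minimise the left side gives supermultiplicativity. Quasi-transitivity makes
`v ↦ w(β_n(v))` take finitely many values, so the minimum is attained (and positive, bridges
going straight up always existing), and it bounds the weighted degree by some `C`, so
`w(β_n) ≤ C ^ n`. Fekete's lemma for `-log w(β_n)` then gives `β = sup_n w(β_n)^{1/n}`.
-/

theorem exists_tendsto_rpow_one_div_of_supermultiplicative {B : ℕ → ℝ} (hpos : ∀ n, 0 < B n)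
    (hmul : ∀ m n, B m * B n ≤ B (m + n)) {C : ℝ} (hC : ∀ n, B n ≤ C ^ n) :
    ∃ β : ℝ, Tendsto (fun n : ℕ => B n ^ (1 / (n : ℝ))) atTop (𝓝 β) ∧ ∀ n, B n ≤ β ^ n := by
  set u : ℕ → ℝ := fun n => -Real.log (B n) with hu_def
  have hu : Subadditive u := fun m n => by
    have := Real.log_le_log (mul_pos (hpos m) (hpos n)) (hmul m n)
    rw [Real.log_mul (hpos m).ne' (hpos n).ne'] at this
    simp only [hu_def]
    linarith
  have hbdd : BddBelow (Set.range fun n => u n / n) := by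
    refine ⟨min 0 (-Real.log C), Set.forall_mem_range.2 fun n => ?_⟩
    rcases n.eq_zero_or_pos with rfl | hn
    · simp
    · have hlog : Real.log (B n) ≤ n * Real.log C := by
        rw [← Real.log_pow]
        exact Real.log_le_log (hpos n) (hC n)
      refine min_le_of_right_le ?_
      rw [le_div_iff₀ (by exact_mod_cast hn)]
      linarith
  refine ⟨Real.exp (-hu.lim), ?_, fun n => ?_⟩
  · refine ((Real.continuous_exp.tendsto _).comp (hu.tendsto_lim hbdd).neg).congr fun n => ?_
    rw [Real.rpow_def_of_pos (hpos n)]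
    simp only [Function.comp_apply, hu_def, neg_div, neg_neg, mul_one_div]
  · rcases n.eq_zero_or_pos with rfl | hn
    · simpa using (mul_le_iff_le_one_left (hpos 0)).1 (hmul 0 0)
    · have hlim := hu.lim_le_div hbdd hn.ne'
      rw [le_div_iff₀ (by exact_mod_cast hn)] at hlim
      calc B n = Real.exp (Real.log (B n)) := (Real.exp_log (hpos n)).symm
        _ ≤ Real.exp (n * -hu.lim) := Real.exp_le_exp.2 (by linarith)
        _ = Real.exp (-hu.lim) ^ n := Real.exp_nat_mul _ n

theorem finite_range_of_invariant {V β : Type*} {G : SimpleGraph V} (H : Subgroup (G ≃g G))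
    (hqt : ∃ s : Finset V, ∀ v, ∃ α ∈ H, ∃ u ∈ s, α u = v) {f : V → β}
    (hf : ∀ α ∈ H, ∀ v, f (α v) = f v) : (Set.range f).Finite := by
  obtain ⟨s, hs⟩ := hqt
  refine (s.finite_toSet.image f).subset ?_
  rintro _ ⟨v, rfl⟩
  obtain ⟨α, hα, u, hu, rfl⟩ := hs v
  exact ⟨u, hu, (hf α hα u).symm⟩

section Walks

variable {V : Type*} {G : SimpleGraph V} {φ : V → V → ℝ} {n : ℕ}

theorem walkWeight_nonneg (hφ : ∀ u v, G.Adj u v → 0 ≤ φ u v) {π : Fin (n + 1) → V}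
    (hπ : ∀ i : Fin n, G.Adj (π i.castSucc) (π i.succ)) : 0 ≤ walkWeight φ n π :=
  Finset.prod_nonneg fun i _ => hφ _ _ (hπ i)

theorem walkWeight_pos (hφ : ∀ u v, G.Adj u v → 0 < φ u v) {π : Fin (n + 1) → V}
    (hπ : ∀ i : Fin n, G.Adj (π i.castSucc) (π i.succ)) : 0 < walkWeight φ n π :=
  Finset.prod_pos fun i _ => hφ _ _ (hπ i)

theorem walkWeight_cons (v : V) (τ : Fin (n + 1) → V) :
    walkWeight φ (n + 1) (Fin.cons v τ) = φ v (τ 0) * walkWeight φ n τ := by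
  simp [walkWeight, Fin.prod_univ_succ]

variable (G) [G.LocallyFinite] [DecidableEq V]

def walkFinset : (n : ℕ) → V → Finset (Fin (n + 1) → V)
  | 0, v => {fun _ => v}
  | n + 1, v => ((G.neighborFinset v).sigma fun x => walkFinset n x).image fun p => Fin.cons v p.2

variable {G}

theorem mem_walkFinset {v : V} {π : Fin (n + 1) → V} :
    π ∈ walkFinset G n v ↔ π 0 = v ∧ ∀ i : Fin n, G.Adj (π i.castSucc) (π i.succ) := by
  induction n generalizing v with
  | zero => simp [walkFinset, funext_iff, Fin.forall_fin_one, eq_comm]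
  | succ n ih =>
    simp only [walkFinset, Finset.mem_image, Finset.mem_sigma, SimpleGraph.mem_neighborFinset, ih]
    constructor
    · rintro ⟨⟨x, τ⟩, ⟨hx, hτ0, hτ⟩, rfl⟩
      dsimp only at hx hτ0 hτ
      subst hτ0
      exact ⟨rfl, Fin.cases (by simpa using hx) fun i => by simpa using hτ i⟩
    · rintro ⟨rfl, hπ⟩
      exact ⟨⟨π 1, Fin.tail π⟩, ⟨hπ 0, rfl, fun i => hπ i.succ⟩, Fin.cons_self_tail π⟩

theorem sum_walkWeight_le_pow (hφ : ∀ u v, G.Adj u v → 0 ≤ φ u v) {C : ℝ}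
    (hC : ∀ u, ∑ x ∈ G.neighborFinset u, φ u x ≤ C) (n : ℕ) (v : V) :
    ∑ π ∈ walkFinset G n v, walkWeight φ n π ≤ C ^ n := by
  induction n generalizing v with
  | zero => simp [walkFinset, walkWeight]
  | succ n ih =>
    have hC0 : 0 ≤ C := (Finset.sum_nonneg fun x hx =>
      hφ v x ((G.mem_neighborFinset v x).1 hx)).trans (hC v)
    calc ∑ π ∈ walkFinset G (n + 1) v, walkWeight φ (n + 1) π
        ≤ ∑ p ∈ (G.neighborFinset v).sigma (fun x => walkFinset G n x),
            walkWeight φ (n + 1) (Fin.cons v p.2) :=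
          Finset.sum_image_le_of_nonneg fun π hπ =>
            walkWeight_nonneg hφ (mem_walkFinset.1 hπ).2
      _ = ∑ x ∈ G.neighborFinset v, φ v x * ∑ τ ∈ walkFinset G n x, walkWeight φ n τ := by
          rw [Finset.sum_sigma]
          refine Finset.sum_congr rfl fun x _ => ?_
          rw [Finset.mul_sum]
          refine Finset.sum_congr rfl fun τ hτ => ?_
          simp only [walkWeight_cons, (mem_walkFinset.1 hτ).1]
      _ ≤ ∑ x ∈ G.neighborFinset v, φ v x * C ^ n :=
          Finset.sum_le_sum fun x hx =>
            mul_le_mul_of_nonneg_left (ih x) (hφ v x ((G.mem_neighborFinset v x).1 hx))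
      _ ≤ C ^ (n + 1) := by
          rw [← Finset.sum_mul, pow_succ']
          exact mul_le_mul_of_nonneg_right (hC v) (pow_nonneg hC0 n)

end Walks

section Bridges

variable {V V' : Type*} {G : SimpleGraph V} {G' : SimpleGraph V'} {h : V → ℤ} {φ : V → V → ℝ}
  {n : ℕ}

theorem graphSAW_comp_iff (f : G ↪g G') {π : Fin (n + 1) → V} :
    GraphSAW G' n (f ∘ π) ↔ GraphSAW G n π := by
  simp [GraphSAW, f.injective.of_comp_iff]

theorem isBridgeWalk_comp_iff {h' : V' → ℤ} {f : V → V'}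
    (hf : ∀ u v, h' (f v) - h' (f u) = h v - h u) {π : Fin (n + 1) → V} :
    IsBridgeWalk h' n (f ∘ π) ↔ IsBridgeWalk h n π := by
  refine forall_congr' fun i => and_congr (imp_congr_right fun _ => ?_) ?_
  · have := hf (π 0) (π i)
    simp only [Function.comp_apply]
    omega
  · have := hf (π i) (π (Fin.last n))
    simp only [Function.comp_apply]
    omega

theorem bridgeWeightFrom_iso_apply (α : G ≃g G) (hφ : ∀ u v, φ (α u) (α v) = φ u v)
    (hh : ∀ u v, h (α v) - h (α u) = h v - h u) (n : ℕ) (v : V) :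
    bridgeWeightFrom G h φ n (α v) = bridgeWeightFrom G h φ n v := by
  let e : {π : Fin (n + 1) → V // GraphSAW G n π ∧ IsBridgeWalk h n π ∧ π 0 = v} ≃
      {π : Fin (n + 1) → V // GraphSAW G n π ∧ IsBridgeWalk h n π ∧ π 0 = α v} :=
    (Equiv.piCongrRight fun _ => α.toEquiv).subtypeEquiv fun π => by
      rw [← graphSAW_comp_iff α.toEmbedding, ← isBridgeWalk_comp_iff hh, ← α.injective.eq_iff]
      rfl
  rw [bridgeWeightFrom, bridgeWeightFrom, ← e.tsum_eq]
  exact tsum_congr fun π => Finset.prod_congr rfl fun i _ => hφ _ _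

theorem graphSAW_and_isBridgeWalk_of_strictMono {π : Fin (n + 1) → V}
    (hπ : ∀ i : Fin n, G.Adj (π i.castSucc) (π i.succ)) (hmono : StrictMono (h ∘ π)) :
    GraphSAW G n π ∧ IsBridgeWalk h n π :=
  ⟨⟨hmono.injective.of_comp, hπ⟩, fun i =>
    ⟨fun hi => hmono (Fin.pos_iff_ne_zero.2 hi), hmono.monotone (Fin.le_last i)⟩⟩

theorem exists_walk_strictMono (hup : ∀ v, ∃ w, G.Adj v w ∧ h v < h w) (n : ℕ) (v : V) :
    ∃ π : Fin (n + 1) → V,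
      π 0 = v ∧ (∀ i : Fin n, G.Adj (π i.castSucc) (π i.succ)) ∧ StrictMono (h ∘ π) := by
  choose f hf_adj hf_lt using hup
  have hmono : StrictMono fun k : ℕ => h (f^[k] v) :=
    strictMono_nat_of_lt_succ fun k => by
      simpa only [Function.iterate_succ_apply'] using hf_lt (f^[k] v)
  refine ⟨fun i => f^[i] v, rfl, fun i => ?_, fun i j hij => hmono hij⟩
  simpa only [Fin.val_castSucc, Fin.val_succ, Function.iterate_succ_apply'] using hf_adj (f^[i] v)

variable (G h) [G.LocallyFinite] [DecidableEq V]

open Classical in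
noncomputable def bridgeFinset (n : ℕ) (v : V) : Finset (Fin (n + 1) → V) :=
  (walkFinset G n v).filter fun π => GraphSAW G n π ∧ IsBridgeWalk h n π

variable {G h}

theorem mem_bridgeFinset {v : V} {π : Fin (n + 1) → V} :
    π ∈ bridgeFinset G h n v ↔ GraphSAW G n π ∧ IsBridgeWalk h n π ∧ π 0 = v := by
  simp only [bridgeFinset, Finset.mem_filter, mem_walkFinset]
  exact ⟨fun ⟨⟨h0, _⟩, hsaw, hb⟩ => ⟨hsaw, hb, h0⟩, fun ⟨hsaw, hb, h0⟩ => ⟨⟨h0, hsaw.2⟩, hsaw, hb⟩⟩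

theorem bridgeWeightFrom_eq_sum (n : ℕ) (v : V) :
    bridgeWeightFrom G h φ n v = ∑ π ∈ bridgeFinset G h n v, walkWeight φ n π := by
  rw [bridgeWeightFrom, ← Finset.tsum_subtype]
  exact (Equiv.subtypeEquivRight fun π => mem_bridgeFinset.symm).tsum_eq
    (fun π => walkWeight φ n π.1)

theorem bridgeWeightFrom_pos (hφ : ∀ u v, G.Adj u v → 0 < φ u v)
    (hup : ∀ v, ∃ w, G.Adj v w ∧ h v < h w) (n : ℕ) (v : V) :
    0 < bridgeWeightFrom G h φ n v := by
  obtain ⟨π, hπ0, hπ, hmono⟩ := exists_walk_strictMono hup n v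
  obtain ⟨hπ_saw, hπ_br⟩ := graphSAW_and_isBridgeWalk_of_strictMono hπ hmono
  rw [bridgeWeightFrom_eq_sum]
  exact Finset.sum_pos (fun ρ hρ => walkWeight_pos hφ (mem_bridgeFinset.1 hρ).1.2)
    ⟨π, mem_bridgeFinset.2 ⟨hπ_saw, hπ_br, hπ0⟩⟩

theorem bridgeWeightFrom_le_sum_walkWeight (hφ : ∀ u v, G.Adj u v → 0 ≤ φ u v) (n : ℕ) (v : V) :
    bridgeWeightFrom G h φ n v ≤ ∑ π ∈ walkFinset G n v, walkWeight φ n π := by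
  rw [bridgeWeightFrom_eq_sum]
  refine Finset.sum_le_sum_of_subset_of_nonneg (fun π hπ => ?_) fun π hπ _ =>
    walkWeight_nonneg hφ (mem_walkFinset.1 hπ).2
  obtain ⟨⟨-, hπ⟩, -, hπ0⟩ := mem_bridgeFinset.1 hπ
  exact mem_walkFinset.2 ⟨hπ0, hπ⟩

end Bridges

section Concatenation

variable {V : Type*} {G : SimpleGraph V} {h : V → ℤ} {φ : V → V → ℝ} {m n : ℕ}

/-- `σ 0` is dropped: it is meant to coincide with the endpoint `π (Fin.last m)`. -/
def walkAppend (π : Fin (m + 1) → V) (σ : Fin (n + 1) → V) : Fin (m + n + 1) → V :=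
  fun k => if hk : (k : ℕ) ≤ m then π ⟨k, by omega⟩ else σ ⟨k - m, by omega⟩

variable {π π' : Fin (m + 1) → V} {σ σ' : Fin (n + 1) → V}

theorem walkAppend_of_le {k : Fin (m + n + 1)} (hk : (k : ℕ) ≤ m) :
    walkAppend π σ k = π ⟨k, by omega⟩ :=
  dif_pos hk

theorem walkAppend_of_ge (hσ : σ 0 = π (Fin.last m)) {k : Fin (m + n + 1)} (hk : m ≤ (k : ℕ)) :
    walkAppend π σ k = σ ⟨k - m, by omega⟩ := by
  rcases hk.eq_or_lt with hk | hk
  · rw [walkAppend_of_le hk.ge]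
    convert hσ.symm using 2 <;> ext <;> simp [← hk]
  · exact dif_neg (by omega)

theorem walkAppend_left (i : Fin (m + 1)) : walkAppend π σ ⟨i, by omega⟩ = π i :=
  walkAppend_of_le i.is_le

theorem walkAppend_right (hσ : σ 0 = π (Fin.last m)) (j : Fin (n + 1)) :
    walkAppend π σ ⟨m + j, by omega⟩ = σ j := by
  rw [walkAppend_of_ge hσ (Nat.le_add_right m j)]
  simp

theorem walkAppend_inj (hσ : σ 0 = π (Fin.last m)) (hσ' : σ' 0 = π' (Fin.last m)) :
    walkAppend π σ = walkAppend π' σ' ↔ π = π' ∧ σ = σ' := by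
  refine ⟨fun he => ⟨funext fun i => ?_, funext fun j => ?_⟩, fun ⟨hπ, hσ⟩ => hπ ▸ hσ ▸ rfl⟩
  · simpa only [walkAppend_left] using congrFun he ⟨i, by omega⟩
  · simpa only [walkAppend_right hσ, walkAppend_right hσ'] using congrFun he ⟨m + j, by omega⟩

theorem walkWeight_walkAppend (hσ : σ 0 = π (Fin.last m)) :
    walkWeight φ (m + n) (walkAppend π σ) = walkWeight φ m π * walkWeight φ n σ := by
  rw [walkWeight, Fin.prod_univ_add]
  congr 1 <;> refine Finset.prod_congr rfl fun i _ => ?_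
  · exact congrArg₂ φ (walkAppend_left i.castSucc) (walkAppend_left i.succ)
  · exact congrArg₂ φ (walkAppend_right hσ i.castSucc) (walkAppend_right hσ i.succ)

theorem walkAppend_adj (hσ : σ 0 = π (Fin.last m))
    (hπ : ∀ i : Fin m, G.Adj (π i.castSucc) (π i.succ))
    (hσ_adj : ∀ j : Fin n, G.Adj (σ j.castSucc) (σ j.succ)) (i : Fin (m + n)) :
    G.Adj (walkAppend π σ i.castSucc) (walkAppend π σ i.succ) := by
  rcases lt_or_ge (i : ℕ) m with hi | hi
  · rw [walkAppend_of_le (by simp; omega), walkAppend_of_le (by simp; omega)]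
    exact hπ ⟨i, hi⟩
  · rw [walkAppend_of_ge hσ (by simpa using hi), walkAppend_of_ge hσ (by simp; omega)]
    convert hσ_adj ⟨i - m, by omega⟩ using 2
    · exact Fin.ext (by simp)
    · exact Fin.ext (by simp; omega)

theorem height_walkAppend_lt (hσ : σ 0 = π (Fin.last m)) (hπ : IsBridgeWalk h m π)
    (hσ_br : IsBridgeWalk h n σ) {k l : Fin (m + n + 1)} (hk : (k : ℕ) ≤ m) (hl : m < (l : ℕ)) :
    h (walkAppend π σ k) < h (walkAppend π σ l) := by
  rw [walkAppend_of_le hk, walkAppend_of_ge hσ hl.le]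
  calc h (π ⟨k, _⟩) ≤ h (σ 0) := hσ ▸ (hπ _).2
    _ < h (σ ⟨l - m, _⟩) := (hσ_br _).1 (by simp [Fin.ext_iff]; omega)

theorem isBridgeWalk_walkAppend (hσ : σ 0 = π (Fin.last m)) (hπ : IsBridgeWalk h m π)
    (hσ_br : IsBridgeWalk h n σ) : IsBridgeWalk h (m + n) (walkAppend π σ) := by
  have hlast : walkAppend π σ (Fin.last (m + n)) = σ (Fin.last n) := by
    rw [walkAppend_of_ge hσ (by simp)]
    exact congrArg σ (Fin.ext (by simp))
  intro k
  rw [hlast]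
  rcases le_or_gt (k : ℕ) m with hk | hk
  · refine ⟨fun hk0 => ?_, ?_⟩
    · rw [walkAppend_of_le hk, walkAppend_of_le (Nat.zero_le m)]
      exact (hπ _).1 (by simpa only [Ne, Fin.ext_iff, Fin.val_zero] using hk0)
    · rw [walkAppend_of_le hk]
      exact ((hπ _).2.trans_eq (congrArg h hσ.symm)).trans (hσ_br 0).2
  · refine ⟨fun _ => height_walkAppend_lt hσ hπ hσ_br (Nat.zero_le m) hk, ?_⟩
    rw [walkAppend_of_ge hσ hk.le]
    exact (hσ_br _).2

theorem graphSAW_walkAppend (hσ : σ 0 = π (Fin.last m)) (hπ : GraphSAW G m π)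
    (hσ_saw : GraphSAW G n σ) (hπ_br : IsBridgeWalk h m π) (hσ_br : IsBridgeWalk h n σ) :
    GraphSAW G (m + n) (walkAppend π σ) := by
  refine ⟨fun k l hkl => ?_, walkAppend_adj hσ hπ.2 hσ_saw.2⟩
  rcases le_or_gt (k : ℕ) m with hk | hk <;> rcases le_or_gt (l : ℕ) m with hl | hl
  · rw [walkAppend_of_le hk, walkAppend_of_le hl] at hkl
    simpa [Fin.ext_iff] using hπ.1 hkl
  · exact absurd (congrArg h hkl) (height_walkAppend_lt hσ hπ_br hσ_br hk hl).ne
  · exact absurd (congrArg h hkl) (height_walkAppend_lt hσ hπ_br hσ_br hl hk).ne'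
  · rw [walkAppend_of_ge hσ hk.le, walkAppend_of_ge hσ hl.le] at hkl
    have := Fin.ext_iff.1 (hσ_saw.1 hkl)
    simp only at this
    exact Fin.ext (by omega)

end Concatenation

section Supermultiplicativity

variable {V : Type*} {G : SimpleGraph V} {h : V → ℤ} {φ : V → V → ℝ}

theorem sum_mul_bridgeWeightFrom_le [G.LocallyFinite] [DecidableEq V]
    (hφ : ∀ u v, G.Adj u v → 0 ≤ φ u v) (m n : ℕ) (v : V) :
    ∑ π ∈ bridgeFinset G h m v, walkWeight φ m π * bridgeWeightFrom G h φ n (π (Fin.last m)) ≤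
      bridgeWeightFrom G h φ (m + n) v := by
  set S := (bridgeFinset G h m v).sigma fun π => bridgeFinset G h n (π (Fin.last m))
  have hjoin : ∀ p ∈ S, p.2 0 = p.1 (Fin.last m) := fun p hp =>
    (mem_bridgeFinset.1 (Finset.mem_sigma.1 hp).2).2.2
  have happend_mem : ∀ p ∈ S, walkAppend p.1 p.2 ∈ bridgeFinset G h (m + n) v := fun p hp => by
    rw [Finset.mem_sigma, mem_bridgeFinset, mem_bridgeFinset] at hp
    obtain ⟨⟨hπ_saw, hπ_br, hπ0⟩, hσ_saw, hσ_br, hσ0⟩ := hp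
    exact mem_bridgeFinset.2 ⟨graphSAW_walkAppend hσ0 hπ_saw hσ_saw hπ_br hσ_br,
      isBridgeWalk_walkAppend hσ0 hπ_br hσ_br, (walkAppend_left 0).trans hπ0⟩
  calc _ = ∑ π ∈ bridgeFinset G h m v, ∑ σ ∈ bridgeFinset G h n (π (Fin.last m)),
        walkWeight φ m π * walkWeight φ n σ :=
        Finset.sum_congr rfl fun π _ => by rw [bridgeWeightFrom_eq_sum, Finset.mul_sum]
    _ = ∑ p ∈ S, walkWeight φ m p.1 * walkWeight φ n p.2 := by
        rw [Finset.sum_sigma]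
    _ = ∑ p ∈ S, walkWeight φ (m + n) (walkAppend p.1 p.2) :=
        Finset.sum_congr rfl fun p hp => (walkWeight_walkAppend (hjoin p hp)).symm
    _ = ∑ ρ ∈ S.image fun p => walkAppend p.1 p.2, walkWeight φ (m + n) ρ := by
        refine (Finset.sum_image fun p hp q hq he => ?_).symm
        obtain ⟨h1, h2⟩ := (walkAppend_inj (hjoin p hp) (hjoin q hq)).1 he
        exact Sigma.ext h1 (heq_of_eq h2)
    _ ≤ bridgeWeightFrom G h φ (m + n) v := by
        rw [bridgeWeightFrom_eq_sum]
        refine Finset.sum_le_sum_of_subset_of_nonneg ?_ fun ρ hρ _ =>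
          walkWeight_nonneg hφ (mem_bridgeFinset.1 hρ).1.2
        simpa only [Finset.image_subset_iff] using happend_mem

theorem minBridgeWeight_le {n : ℕ} (hfin : (Set.range (bridgeWeightFrom G h φ n)).Finite)
    (v : V) : minBridgeWeight G h φ n ≤ bridgeWeightFrom G h φ n v :=
  csInf_le hfin.bddBelow ⟨v, rfl⟩

theorem exists_bridgeWeightFrom_eq_minBridgeWeight [Nonempty V] {n : ℕ}
    (hfin : (Set.range (bridgeWeightFrom G h φ n)).Finite) :
    ∃ v, bridgeWeightFrom G h φ n v = minBridgeWeight G h φ n :=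
  (Set.range_nonempty _).csInf_mem hfin

theorem minBridgeWeight_mul_le [G.LocallyFinite] [Nonempty V]
    (hφ : ∀ u v, G.Adj u v → 0 ≤ φ u v)
    (hfin : ∀ n, (Set.range (bridgeWeightFrom G h φ n)).Finite) (m n : ℕ) :
    minBridgeWeight G h φ m * minBridgeWeight G h φ n ≤ minBridgeWeight G h φ (m + n) := by
  classical
  obtain ⟨v, hv⟩ := exists_bridgeWeightFrom_eq_minBridgeWeight (hfin (m + n))
  have hn : 0 ≤ minBridgeWeight G h φ n := by
    obtain ⟨u, hu⟩ := exists_bridgeWeightFrom_eq_minBridgeWeight (hfin n)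
    rw [← hu, bridgeWeightFrom_eq_sum]
    exact Finset.sum_nonneg fun π hπ => walkWeight_nonneg hφ (mem_bridgeFinset.1 hπ).1.2
  calc minBridgeWeight G h φ m * minBridgeWeight G h φ n
      ≤ bridgeWeightFrom G h φ m v * minBridgeWeight G h φ n :=
        mul_le_mul_of_nonneg_right (minBridgeWeight_le (hfin m) v) hn
    _ ≤ ∑ π ∈ bridgeFinset G h m v,
          walkWeight φ m π * bridgeWeightFrom G h φ n (π (Fin.last m)) := by
        rw [bridgeWeightFrom_eq_sum, Finset.sum_mul]
        exact Finset.sum_le_sum fun π hπ => mul_le_mul_of_nonneg_left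
          (minBridgeWeight_le (hfin n) _) (walkWeight_nonneg hφ (mem_bridgeFinset.1 hπ).1.2)
    _ ≤ minBridgeWeight G h φ (m + n) := hv ▸ sum_mul_bridgeWeightFrom_le hφ m n v

theorem sum_neighborFinset_iso_apply [G.LocallyFinite] (α : G ≃g G)
    (hφ : ∀ u v, φ (α u) (α v) = φ u v) (u : V) :
    ∑ x ∈ G.neighborFinset (α u), φ (α u) x = ∑ x ∈ G.neighborFinset u, φ u x :=
  (Finset.sum_equiv α.toEquiv (fun x => by simpa using α.map_adj_iff.symm)
    fun x _ => (hφ u x).symm).symm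

end Supermultiplicativity

theorem bridge_weight_supermultiplicative_and_limit_general {V : Type*} (G : SimpleGraph V)
    (hlf : G.LocallyFinite)
    (H : Subgroup (G ≃g G))
    (hqt : ∃ s : Finset V, ∀ v : V, ∃ α ∈ H, ∃ u ∈ s, α u = v)
    (φ : V → V → ℝ)
    (hφpos : ∀ u v : V, G.Adj u v → 0 < φ u v)
    (hφinv : ∀ α ∈ H, ∀ u v : V, φ (α u) (α v) = φ u v)
    (v₀ : V) (h : V → ℤ)
    (hdi : ∀ α ∈ H, ∀ u v : V, h (α v) - h (α u) = h v - h u)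
    (hupdown : ∀ v : V, ∃ u w : V, G.Adj v u ∧ G.Adj v w ∧ h u < h v ∧ h v < h w) :
    (∀ m n : ℕ,
      minBridgeWeight G h φ m * minBridgeWeight G h φ n ≤ minBridgeWeight G h φ (m + n)) ∧
    ∃ β : ℝ,
      Tendsto (fun n : ℕ => (minBridgeWeight G h φ n) ^ (1 / (n : ℝ))) atTop (𝓝 β) ∧
      ∀ n : ℕ, minBridgeWeight G h φ n ≤ β ^ n := by
  classical
  have : Nonempty V := ⟨v₀⟩
  have hφ : ∀ u v, G.Adj u v → 0 ≤ φ u v := fun u v huv => (hφpos u v huv).le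
  have hup : ∀ v, ∃ w, G.Adj v w ∧ h v < h w := fun v => by
    obtain ⟨-, w, -, hw, -, hlt⟩ := hupdown v
    exact ⟨w, hw, hlt⟩
  have hfin : ∀ n, (Set.range (bridgeWeightFrom G h φ n)).Finite := fun n =>
    finite_range_of_invariant H hqt fun α hα =>
      bridgeWeightFrom_iso_apply α (hφinv α hα) (hdi α hα) n
  obtain ⟨C, hC⟩ := (finite_range_of_invariant H hqt
    (f := fun u => ∑ x ∈ G.neighborFinset u, φ u x)
    fun α hα => sum_neighborFinset_iso_apply α (hφinv α hα)).bddAbove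
  have hsuper := minBridgeWeight_mul_le hφ hfin
  refine ⟨hsuper, exists_tendsto_rpow_one_div_of_supermultiplicative (fun n => ?_) hsuper
    (C := C) fun n => ?_⟩
  · obtain ⟨v, hv⟩ := exists_bridgeWeightFrom_eq_minBridgeWeight (hfin n)
    exact hv ▸ bridgeWeightFrom_pos hφpos hup n v
  · calc minBridgeWeight G h φ n ≤ bridgeWeightFrom G h φ n v₀ := minBridgeWeight_le (hfin n) v₀
      _ ≤ ∑ π ∈ walkFinset G n v₀, walkWeight φ n π := bridgeWeightFrom_le_sum_walkWeight hφ n v₀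
      _ ≤ C ^ n := sum_walkWeight_le_pow hφ (fun u => hC ⟨u, rfl⟩) n v₀

/-- On a connected, infinite, quasi-transitive, locally finite graph with a graph
height function `(h, H)` and `H`-invariant weights, the minimal bridge weights are
supermultiplicative, the bridge constant `β = lim w(β_n)^{1/n}` exists, and
`w(β_n) ≤ β^n` for all `n`. -/
theorem bridge_weight_supermultiplicative_and_limit {V : Type*} (G : SimpleGraph V)
    (hconn : G.Connected) (hinf : Infinite V) (hlf : G.LocallyFinite)
    (H : Subgroup (G ≃g G))
    (hqt : ∃ s : Finset V, ∀ v : V, ∃ α ∈ H, ∃ u ∈ s, α u = v)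
    (φ : V → V → ℝ)
    (hφsym : ∀ u v : V, φ u v = φ v u)
    (hφpos : ∀ u v : V, G.Adj u v → 0 < φ u v)
    (hφinv : ∀ α ∈ H, ∀ u v : V, φ (α u) (α v) = φ u v)
    (v₀ : V) (h : V → ℤ) (h0 : h v₀ = 0)
    (hdi : ∀ α ∈ H, ∀ u v : V, h (α v) - h (α u) = h v - h u)
    (hupdown : ∀ v : V, ∃ u w : V, G.Adj v u ∧ G.Adj v w ∧ h u < h v ∧ h v < h w) :
    (∀ m n : ℕ,
      minBridgeWeight G h φ m * minBridgeWeight G h φ n ≤ minBridgeWeight G h φ (m + n)) ∧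
    ∃ β : ℝ,
      Tendsto (fun n : ℕ => (minBridgeWeight G h φ n) ^ (1 / (n : ℝ))) atTop (𝓝 β) ∧
      ∀ n : ℕ, minBridgeWeight G h φ n ≤ β ^ n :=
  bridge_weight_supermultiplicative_and_limit_general G hlf H hqt φ hφpos hφinv v₀ h hdi hupdown
end

section
/- Let Γ be a finitely generated group. If some Cayley graph G of Γ possesses a strong graph height function (h,H) — that is, H is a normal finite-index subgroup of Γ acting by left multiplication, h : Γ → ℤ with h(id)=0 is H-difference-invariant, and every vertex has neighbours of strictly smaller and strictly larger height — then Γ is virtually H-indicable: there exists a surjective homomorphism F : H → ℤ. -/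
/-- If a Cayley graph of a finitely generated group `Γ` (with symmetric generating
set `S` not containing the identity) possesses a strong graph height function
`(h, H)`, then `Γ` is virtually `H`-indicable: there is a surjective homomorphism
from `H` onto `ℤ`. -/
theorem strong_height_function_implies_indicable {Γ : Type*} [Group Γ] [Group.FG Γ]
    (H : Subgroup Γ) [H.Normal] [H.FiniteIndex]
    (S : Set Γ) (hgen : Subgroup.closure S = ⊤)
    (hSsym : ∀ s ∈ S, s⁻¹ ∈ S) (hSid : (1 : Γ) ∉ S)
    (h : Γ → ℤ) (h1 : h 1 = 0)
    (hdi : ∀ α ∈ H, ∀ u v : Γ, h (α * v) - h (α * u) = h v - h u)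
    (hupdown : ∀ v : Γ, ∃ s ∈ S, ∃ t ∈ S, h (v * s) < h v ∧ h v < h (v * t)) :
    ∃ F : H →* Multiplicative ℤ, Function.Surjective F := by
  -- additivity of h over H on the left
  have hadd : ∀ α ∈ H, ∀ v : Γ, h (α * v) = h α + h v := by
    intro α hα v
    have := hdi α hα 1 v
    simp only [mul_one, h1] at this
    omega
  -- h is unbounded above
  have hub : ∀ n : ℕ, ∃ v : Γ, (n : ℤ) ≤ h v := by
    intro n
    induction n with
    | zero => exact ⟨1, by simp [h1]⟩
    | succ n ih =>
      obtain ⟨v, hv⟩ := ih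
      obtain ⟨s, _, t, _, _, h2'⟩ := hupdown v
      exact ⟨v * t, by push_cast; omega⟩
  -- some element of H has nonzero height
  have hne : ∃ α ∈ H, h α ≠ 0 := by
    by_contra hc
    push_neg at hc
    have key : ∀ γ : Γ, h γ = h (Quotient.out (QuotientGroup.mk (s := H) γ)) := by
      intro γ
      set r := Quotient.out (QuotientGroup.mk (s := H) γ) with hr
      have hmk : QuotientGroup.mk (s := H) r = QuotientGroup.mk (s := H) γ :=
        Quotient.out_eq _
      have hmem : r⁻¹ * γ ∈ H := (QuotientGroup.eq (s := H)).1 hmk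
      have hα : γ * r⁻¹ ∈ H := by
        have := (inferInstance : H.Normal).conj_mem _ hmem γ
        simpa [mul_assoc] using this
      have := hadd _ hα r
      have h0 : h (γ * r⁻¹) = 0 := hc _ hα
      simp only [h0, zero_add, inv_mul_cancel_right, mul_assoc, inv_mul_cancel,
        mul_one] at this
      omega
    have hfinq : Finite (Γ ⧸ H) := H.finite_quotient_of_finiteIndex
    have hfin : (Set.range fun q : Γ ⧸ H => h (Quotient.out q)).Finite :=
      Set.finite_range _
    obtain ⟨M, hM⟩ := hfin.bddAbove
    obtain ⟨v, hv⟩ := hub (M.toNat + 1)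
    have hle : h (Quotient.out (QuotientGroup.mk (s := H) v)) ≤ M :=
      hM (Set.mem_range_self _)
    rw [key v] at hv
    push_cast at hv
    omega
  obtain ⟨α', hα', hh0⟩ := hne
  -- the image of h on H is an additive subgroup of ℤ
  have hneg : ∀ α ∈ H, h α⁻¹ = -h α := by
    intro α hα
    have := hadd _ (H.inv_mem hα) α
    simp only [inv_mul_cancel, h1] at this
    omega
  let K : AddSubgroup ℤ :=
    { carrier := h '' (H : Set Γ)
      zero_mem' := ⟨1, H.one_mem, h1⟩
      add_mem' := by
        rintro x y ⟨α, hα, rfl⟩ ⟨β, hβ, rfl⟩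
        exact ⟨α * β, H.mul_mem hα hβ, hadd α hα β⟩
      neg_mem' := by
        rintro x ⟨α, hα, rfl⟩
        exact ⟨α⁻¹, H.inv_mem hα, hneg α hα⟩ }
  obtain ⟨a, hK⟩ := Int.subgroup_cyclic K
  have hmemK : ∀ α ∈ H, ∃ n : ℤ, n * a = h α := by
    intro α hα
    have : h α ∈ K := ⟨α, hα, rfl⟩
    rw [hK, AddSubgroup.mem_closure_singleton] at this
    simpa using this
  have ha : a ≠ 0 := by
    rintro rfl
    obtain ⟨n, hn⟩ := hmemK α' hα'
    simp at hn
    exact hh0 hn.symm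
  have haK : a ∈ K := by
    rw [hK]
    exact AddSubgroup.subset_closure rfl
  obtain ⟨α₀, hα₀, hα₀a⟩ := haK
  -- build the homomorphism
  refine ⟨{ toFun := fun α => Multiplicative.ofAdd (h (α : Γ) / a)
            map_one' := by simp [h1]
            map_mul' := ?_ }, ?_⟩
  · intro α β
    obtain ⟨m, hm⟩ := hmemK (α : Γ) α.2
    obtain ⟨n, hn⟩ := hmemK (β : Γ) β.2
    have : h ((α : Γ) * β) = (m + n) * a := by
      rw [hadd _ α.2]; rw [← hm, ← hn]; ring
    have hcoe : ((α * β : H) : Γ) = (α : Γ) * β := rfl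
    simp only [hcoe, this, ← hm, ← hn, Int.mul_ediv_cancel _ ha]
    rw [← ofAdd_add]
  · intro n
    refine ⟨⟨α₀, hα₀⟩ ^ (Multiplicative.toAdd n), ?_⟩
    have h1' : h α₀ / a = 1 := by rw [hα₀a, Int.ediv_self ha]
    have hz : ∀ k : ℤ, ((⟨α₀, hα₀⟩ ^ k : H) : Γ) = α₀ ^ k := fun k => rfl
    -- use that the map is a hom on powers: compute directly
    have hpow : ∀ k : ℤ, h ((α₀ : Γ) ^ k) = k * h α₀ := by
      have hp : ∀ m : ℕ, h ((α₀ : Γ) ^ m) = m * h α₀ := by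
        intro m
        induction m with
        | zero => simpa using h1
        | succ m ih =>
          rw [pow_succ', hadd _ hα₀, ih]
          push_cast
          ring
      intro k
      rcases k with m | m
      · simpa using hp m
      · have hmem : (α₀ : Γ) ^ (m + 1) ∈ H := H.pow_mem hα₀ _
        have := hneg _ hmem
        rw [zpow_negSucc, this, hp (m + 1), Int.negSucc_eq]
        push_cast
        ring
    show Multiplicative.ofAdd (h ((⟨α₀, hα₀⟩ ^ (Multiplicative.toAdd n) : H) : Γ) / a) = n
    rw [hz, hpow, hα₀a, Int.mul_ediv_cancel _ ha]
    rfl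
end
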